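/- If m < n (natural numbers), then every C[x]-Lie algebra morphism φ: g(m) → g(n) that sends the C[x]-span of H_m into the span of H_n, the span of X_m into the span of X_n, and the span of Y_m into the span of Y_n, is the zero map. -/
import Mathlib


open Polynomial

/-- The bracket of the family `g(n)` on the free `ℂ[x]`-module with
basis `H = e 0`, `X = e 1`, `Y = e 2`, determined by
`[H,X] = 2X`, `[H,Y] = -2Y`, `[X,Y] = x^n • H`. -/
noncomputable def br (n : ℕ) (a b : Fin 3 → Polynomial ℂ) : Fin 3 → Polynomial ℂ :=
  ![X ^ n * (a 1 * b 2 - a 2 * b 1),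
    2 * (a 0 * b 1 - a 1 * b 0),
    (-2) * (a 0 * b 2 - a 2 * b 0)]

noncomputable def Hv : Fin 3 → Polynomial ℂ := ![1, 0, 0]
noncomputable def Xv : Fin 3 → Polynomial ℂ := ![0, 1, 0]
noncomputable def Yv : Fin 3 → Polynomial ℂ := ![0, 0, 1]

/-- If `m < n`, then every `ℂ[x]`-Lie algebra morphism `φ : g(m) → g(n)`
sending the span of `H_m` into the span of `H_n`, the span of `X_m` into the span of `X_n`,
and the span of `Y_m` into the span of `Y_n`, is zero. -/
theorem no_nonzero_morphism_up (m n : ℕ) (hmn : m < n)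
    (φ : (Fin 3 → Polynomial ℂ) →ₗ[Polynomial ℂ] (Fin 3 → Polynomial ℂ))
    (hH : ∃ fH : Polynomial ℂ, φ Hv = fH • Hv)
    (hX : ∃ fX : Polynomial ℂ, φ Xv = fX • Xv)
    (hY : ∃ fY : Polynomial ℂ, φ Yv = fY • Yv)
    (hbr : ∀ a b, φ (br m a b) = br n (φ a) (φ b)) :
    φ = 0 := by
  obtain ⟨fH, hfH⟩ := hH
  obtain ⟨fX, hfX⟩ := hX
  obtain ⟨fY, hfY⟩ := hY
  have b1 : br m Hv Xv = (2 : Polynomial ℂ) • Xv := by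
    funext i; fin_cases i <;> simp [br, Hv, Xv, Yv]
  have b2 : br m Hv Yv = (-2 : Polynomial ℂ) • Yv := by
    funext i; fin_cases i <;> simp [br, Hv, Xv, Yv]
  have b3 : br m Xv Yv = (X ^ m : Polynomial ℂ) • Hv := by
    funext i; fin_cases i <;> simp [br, Hv, Xv, Yv]
  have e1 := hbr Hv Xv
  have e2 := hbr Hv Yv
  have e3 := hbr Xv Yv
  rw [b1, map_smul, hfH, hfX] at e1
  rw [b2, map_smul, hfH, hfY] at e2
  rw [b3, map_smul, hfH, hfX, hfY] at e3
  have q1 : 2 * fX = 2 * (fH * fX) := by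
    have := congrFun e1 1
    simpa [br, Hv, Xv, Yv, smul_eq_mul, mul_comm, mul_left_comm] using this
  have q2 : fY = fH * fY := by
    have := congrFun e2 2
    simpa [br, Hv, Xv, Yv, smul_eq_mul, mul_comm, mul_left_comm] using this
  have q3 : X ^ m * fH = X ^ n * (fX * fY) := by
    have := congrFun e3 0
    simpa [br, Hv, Xv, Yv, smul_eq_mul, mul_comm, mul_left_comm] using this
  have q1' : fX = fH * fX := by
    have h2 : (2 : Polynomial ℂ) ≠ 0 := by norm_num
    exact mul_left_cancel₀ h2 q1
  -- show all three scalars are zero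
  have hzero : fH = 0 ∧ fX = 0 ∧ fY = 0 := by
    by_cases hx0 : fX = 0
    · have hH0 : fH = 0 := by
        have : X ^ m * fH = 0 := by rw [q3, hx0]; ring
        rcases mul_eq_zero.mp this with h | h
        · exact absurd h (pow_ne_zero m Polynomial.X_ne_zero)
        · exact h
      have hY0 : fY = 0 := by
        have := q2
        rw [hH0] at this
        simpa using this
      exact ⟨hH0, hx0, hY0⟩
    · by_cases hy0 : fY = 0
      · have hH0 : fH = 0 := by
          have : X ^ m * fH = 0 := by rw [q3, hy0]; ring
          rcases mul_eq_zero.mp this with h | h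
          · exact absurd h (pow_ne_zero m Polynomial.X_ne_zero)
          · exact h
        have hX0 : fX = 0 := by
          have := q1'
          rw [hH0] at this
          simpa using this
        exact ⟨hH0, hX0, hy0⟩
      · exfalso
        have hH1 : fH = 1 := by
          have h : fX * (1 - fH) = 0 := by linear_combination q1'
          exact (sub_eq_zero.mp ((mul_eq_zero.mp h).resolve_left hx0)).symm
        rw [hH1, mul_one] at q3
        have hxy : fX * fY ≠ 0 := mul_ne_zero hx0 hy0
        have hdeg := congrArg Polynomial.natDegree q3
        rw [Polynomial.natDegree_X_pow,
          Polynomial.natDegree_mul (pow_ne_zero n Polynomial.X_ne_zero) hxy,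
          Polynomial.natDegree_X_pow] at hdeg
        omega
  obtain ⟨hH0, hX0, hY0⟩ := hzero
  apply LinearMap.ext
  intro a
  have ha : a = a 0 • Hv + a 1 • Xv + a 2 • Yv := by
    funext i; fin_cases i <;> simp [Hv, Xv, Yv]
  rw [ha]
  simp [map_add, map_smul, hfH, hfX, hfY, hH0, hX0, hY0]
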